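/- Let d be a positive integer, call a d×d complex matrix a density matrix if it is positive semidefinite with trace 1, and let F be a convex set of density matrices on ℂ^d. Define the robustness R(ρ) := inf { s ∈ [0,∞) : there exists a density matrix π on ℂ^d with (1/(1+s))·(ρ + s·π) ∈ F } (with inf over the empty set equal to +∞). Then R is convex: for all density matrices ρ₁, ρ₂ on ℂ^d and all t ∈ [0,1], R(t·ρ₁ + (1−t)·ρ₂) ≤ t·R(ρ₁) + (1−t)·R(ρ₂) (as extended nonnegative reals). -/

import Mathlib

open scoped ENNReal ComplexOrder

/-- A density matrix: positive semidefinite with trace one. -/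
def IsDensityMatrix {d : ℕ} (ρ : Matrix (Fin d) (Fin d) ℂ) : Prop :=
  ρ.PosSemidef ∧ ρ.trace = 1

/-- The (global) robustness of `ρ` relative to the set `F`:
`R(ρ) = inf { s ≥ 0 : ∃ density matrix π, (ρ + s•π)/(1+s) ∈ F }`,
with the infimum over the empty set equal to `+∞`. -/
noncomputable def robustness {d : ℕ} (F : Set (Matrix (Fin d) (Fin d) ℂ))
    (ρ : Matrix (Fin d) (Fin d) ℂ) : ℝ≥0∞ :=
  sInf (ENNReal.ofReal '' {s : ℝ | 0 ≤ s ∧ ∃ π : Matrix (Fin d) (Fin d) ℂ,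
    IsDensityMatrix π ∧ (1 / (1 + s)) • (ρ + s • π) ∈ F})

lemma aux_smul_psd {d : ℕ} {M : Matrix (Fin d) (Fin d) ℂ} (hM : M.PosSemidef) {r : ℝ}
    (hr : 0 ≤ r) : (r • M).PosSemidef := by
  have h : (r • M) = (r : ℂ) • M := by ext i j; simp [Complex.real_smul]
  rw [h]
  constructor
  · unfold Matrix.IsHermitian
    rw [Matrix.conjTranspose_smul, hM.1.eq]
    simp [Complex.conj_ofReal]
  · intro x
    exact (hM.smul (Complex.zero_le_real.mpr hr)).2 x

lemma aux_combine {d : ℕ} (F : Set (Matrix (Fin d) (Fin d) ℂ)) (hconv : Convex ℝ F)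
    (ρ₁ ρ₂ : Matrix (Fin d) (Fin d) ℂ) {t s₁ s₂ : ℝ}
    (ht0 : 0 ≤ t) (ht1 : t ≤ 1) (hs₁ : 0 ≤ s₁) (hs₂ : 0 ≤ s₂)
    {π₁ π₂ : Matrix (Fin d) (Fin d) ℂ}
    (hπ₁ : IsDensityMatrix π₁) (hπ₂ : IsDensityMatrix π₂)
    (hσ₁ : (1 / (1 + s₁)) • (ρ₁ + s₁ • π₁) ∈ F)
    (hσ₂ : (1 / (1 + s₂)) • (ρ₂ + s₂ • π₂) ∈ F) :
    ∃ π : Matrix (Fin d) (Fin d) ℂ, IsDensityMatrix π ∧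
      (1 / (1 + (t * s₁ + (1 - t) * s₂))) •
        ((t • ρ₁ + (1 - t) • ρ₂) + (t * s₁ + (1 - t) * s₂) • π) ∈ F := by
  set s : ℝ := t * s₁ + (1 - t) * s₂ with hs_def
  have ha : 0 ≤ t * s₁ := mul_nonneg ht0 hs₁
  have hb : 0 ≤ (1 - t) * s₂ := mul_nonneg (by linarith) hs₂
  have hs : 0 ≤ s := add_nonneg ha hb
  have h1s₁ : (1 + s₁) ≠ 0 := by positivity
  have h1s₂ : (1 + s₂) ≠ 0 := by positivity
  have h1s : (1 + s) ≠ 0 := by positivity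
  rcases eq_or_lt_of_le hs with hs0 | hspos
  · -- s = 0 : the mixed state itself is free
    refine ⟨π₁, hπ₁, ?_⟩
    have ha0 : t * s₁ = 0 := by nlinarith
    have hb0 : (1 - t) * s₂ = 0 := by nlinarith
    have key : t • ((1 / (1 + s₁)) • (ρ₁ + s₁ • π₁)) +
        (1 - t) • ((1 / (1 + s₂)) • (ρ₂ + s₂ • π₂)) =
        (1 / (1 + s)) • ((t • ρ₁ + (1 - t) • ρ₂) + s • π₁) := by
      rw [← hs0]
      match_scalars <;> field_simp <;> nlinarith [mul_nonneg ht0 hs₁, mul_nonneg (show (0:ℝ) ≤ 1 - t by linarith) hs₂]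
    rw [← key]
    exact hconv hσ₁ hσ₂ ht0 (by linarith) (by ring)
  · -- s > 0 : mix the noise states
    refine ⟨s⁻¹ • ((t * s₁) • π₁ + ((1 - t) * s₂) • π₂), ⟨?_, ?_⟩, ?_⟩
    · exact aux_smul_psd ((aux_smul_psd hπ₁.1 ha).add (aux_smul_psd hπ₂.1 hb))
        (inv_nonneg.mpr hs)
    · simp only [Matrix.trace_smul, Matrix.trace_add, hπ₁.2, hπ₂.2]
      have : s⁻¹ * (t * s₁ + (1 - t) * s₂) = 1 := by
        rw [← hs_def]; field_simp
      calc s⁻¹ • ((t * s₁) • (1:ℂ) + ((1 - t) * s₂) • (1:ℂ))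
          = ((s⁻¹ * (t * s₁ + (1 - t) * s₂) : ℝ) : ℂ) := by
            simp [Complex.real_smul]; ring
        _ = 1 := by rw [this]; norm_num
    · have key : ((t * (1 + s₁)) / (1 + s)) • ((1 / (1 + s₁)) • (ρ₁ + s₁ • π₁)) +
          (((1 - t) * (1 + s₂)) / (1 + s)) • ((1 / (1 + s₂)) • (ρ₂ + s₂ • π₂)) =
          (1 / (1 + s)) • ((t • ρ₁ + (1 - t) • ρ₂) +
            s • (s⁻¹ • ((t * s₁) • π₁ + ((1 - t) * s₂) • π₂))) := by
        match_scalars <;> field_simp <;> ring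
      rw [← key]
      refine hconv hσ₁ hσ₂ ?_ ?_ ?_
      · exact div_nonneg (mul_nonneg ht0 (by linarith)) (by linarith)
      · exact div_nonneg (mul_nonneg (by linarith) (by linarith)) (by linarith)
      · field_simp
        rw [hs_def]; ring


lemma aux_le {d : ℕ} (F : Set (Matrix (Fin d) (Fin d) ℂ)) (ρ : Matrix (Fin d) (Fin d) ℂ)
    {s : ℝ} (hs : 0 ≤ s) (h : ∃ π : Matrix (Fin d) (Fin d) ℂ,
      IsDensityMatrix π ∧ (1 / (1 + s)) • (ρ + s • π) ∈ F) :
    robustness F ρ ≤ ENNReal.ofReal s :=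
  sInf_le ⟨s, ⟨hs, h⟩, rfl⟩

/-- The robustness relative to a convex set of free states is a
convex function of the state. -/
theorem robustness_convex
    {d : ℕ} (hd : 0 < d) (F : Set (Matrix (Fin d) (Fin d) ℂ))
    (hF : ∀ σ ∈ F, IsDensityMatrix σ) (hconv : Convex ℝ F)
    (ρ₁ ρ₂ : Matrix (Fin d) (Fin d) ℂ)
    (h₁ : IsDensityMatrix ρ₁) (h₂ : IsDensityMatrix ρ₂)
    (t : ℝ) (ht : t ∈ Set.Icc (0 : ℝ) 1) :
    robustness F (t • ρ₁ + (1 - t) • ρ₂) ≤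
      ENNReal.ofReal t * robustness F ρ₁ +
        ENNReal.ofReal (1 - t) * robustness F ρ₂ := by
  obtain ⟨ht0, ht1⟩ := ht
  rcases eq_or_lt_of_le ht0 with h0 | h0
  · simp [← h0]
  rcases eq_or_lt_of_le ht1 with h1 | h1
  · simp [h1]
  -- now 0 < t < 1
  have ht0' : ENNReal.ofReal t ≠ 0 := by simp [ENNReal.ofReal_eq_zero]; linarith
  have ht1' : ENNReal.ofReal (1 - t) ≠ 0 := by simp [ENNReal.ofReal_eq_zero]; linarith
  apply ENNReal.le_of_forall_pos_le_add
  intro ε hε hfin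
  have hR₁ : robustness F ρ₁ ≠ ⊤ := by
    intro h; rw [h, ENNReal.mul_top ht0'] at hfin; simp at hfin
  have hR₂ : robustness F ρ₂ ≠ ⊤ := by
    intro h; rw [h, ENNReal.mul_top ht1'] at hfin
    simp [ENNReal.add_eq_top] at hfin
  have hεne : (ε : ℝ≥0∞) ≠ 0 := by exact_mod_cast hε.ne'
  have hlt₁ : robustness F ρ₁ < robustness F ρ₁ + ε := ENNReal.lt_add_right hR₁ hεne
  have hlt₂ : robustness F ρ₂ < robustness F ρ₂ + ε := ENNReal.lt_add_right hR₂ hεne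
  obtain ⟨x₁, hx₁mem, hx₁⟩ := sInf_lt_iff.mp (hlt₁ : robustness F ρ₁ < _)
  obtain ⟨x₂, hx₂mem, hx₂⟩ := sInf_lt_iff.mp (hlt₂ : robustness F ρ₂ < _)
  obtain ⟨s₁, ⟨hs₁0, π₁, hπ₁, hσ₁⟩, rfl⟩ := hx₁mem
  obtain ⟨s₂, ⟨hs₂0, π₂, hπ₂, hσ₂⟩, rfl⟩ := hx₂mem
  have hcomb := aux_combine F hconv ρ₁ ρ₂ ht0 ht1 hs₁0 hs₂0 hπ₁ hπ₂ hσ₁ hσ₂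
  have hle : robustness F (t • ρ₁ + (1 - t) • ρ₂) ≤
      ENNReal.ofReal (t * s₁ + (1 - t) * s₂) :=
    aux_le F _ (add_nonneg (mul_nonneg ht0 hs₁0) (mul_nonneg (by linarith) hs₂0)) hcomb
  calc robustness F (t • ρ₁ + (1 - t) • ρ₂)
      ≤ ENNReal.ofReal (t * s₁ + (1 - t) * s₂) := hle
    _ = ENNReal.ofReal t * ENNReal.ofReal s₁ +
        ENNReal.ofReal (1 - t) * ENNReal.ofReal s₂ := by
        rw [ENNReal.ofReal_add (mul_nonneg ht0 hs₁0) (mul_nonneg (by linarith) hs₂0),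
          ENNReal.ofReal_mul ht0, ENNReal.ofReal_mul (by linarith)]
    _ ≤ ENNReal.ofReal t * (robustness F ρ₁ + ε) +
        ENNReal.ofReal (1 - t) * (robustness F ρ₂ + ε) := by
        gcongr <;> exact le_of_lt ‹_›
    _ = (ENNReal.ofReal t * robustness F ρ₁ + ENNReal.ofReal (1 - t) * robustness F ρ₂) +
        (ENNReal.ofReal t + ENNReal.ofReal (1 - t)) * ε := by ring
    _ = (ENNReal.ofReal t * robustness F ρ₁ + ENNReal.ofReal (1 - t) * robustness F ρ₂) + ε := by
        rw [← ENNReal.ofReal_add ht0 (by linarith)]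
        simp
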